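/- Let M be a finite matroid of rank n ≥ 2 whose ground set is partitioned into disjoint sets A and B that are both circuit-hyperplanes of M, and such that every non-spanning circuit of M is equal to A or to B. Then M is equal to its own dual: M✶ = M. (That is, the matroid P_n is self-dual.) -/

import Mathlib

/-!
A circuit-hyperplane of `M` has exactly `rank M` elements, so every non-spanning circuit of `M`
has `rank M` elements: `M` is sparse paving. A dependent set of size `rank M` then contains a
non-spanning circuit of the same size, so the bases of `M` are the `rank M`-subsets of `E` that
are not circuits, i.e. all of them except `A` and `B`. As `|E| = 2 rank M` and complementation
in `E` swaps `A` and `B`, this family is closed under complements, which says `M✶ = M`.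
-/

open Set

namespace Matroid

variable {α β : Type*}

/-- A circuit of a matroid is a minimal dependent set. -/
def Circuit (M : Matroid α) (C : Set α) : Prop :=
  M.Dep C ∧ ∀ ⦃D : Set α⦄, M.Dep D → D ⊆ C → D = C

/-- The rank of a set `X` in a matroid `M` : the maximum cardinality of an
independent subset of `X`. -/
noncomputable def rkOn (M : Matroid α) (X : Set α) : ℕ :=
  sSup {n | ∃ I, M.Indep I ∧ I ⊆ X ∧ I.ncard = n}

/-- The rank of a matroid : the rank of its ground set. -/
noncomputable def rank (M : Matroid α) : ℕ := M.rkOn M.E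

/-- A hyperplane : a flat whose rank is one less than the rank of the matroid. -/
def Hyperplane (M : Matroid α) (H : Set α) : Prop :=
  M.IsFlat H ∧ M.rkOn H + 1 = M.rank

/-- Deletion of the set `D` from the matroid `M`. -/
def delete' (M : Matroid α) (D : Set α) : Matroid α := M.restrict (M.E \ D)

/-- Contraction of the set `C` in the matroid `M`. -/
def contract' (M : Matroid α) (C : Set α) : Matroid α := ((M✶).delete' C)✶

/-- A circuit `C` of `M` is freely placed if every circuit `C'` of `M` with `C' ≠ C`
and `C' ∩ C ≠ ∅` is spanning. -/
def FreelyPlaced (M : Matroid α) (C : Set α) : Prop :=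
  ∀ ⦃C' : Set α⦄, M.Circuit C' → C' ≠ C → (C' ∩ C).Nonempty → M.Spanning C'

/-- A coloop is an element belonging to every base. -/
def Coloop (M : Matroid α) (e : α) : Prop := ∀ ⦃B : Set α⦄, M.IsBase B → e ∈ B

/-- An element `e` is free in `M` if it is not a coloop and every circuit
containing `e` is spanning. -/
def FreeElem (M : Matroid α) (e : α) : Prop :=
  e ∈ M.E ∧ ¬ M.Coloop e ∧ ∀ ⦃C : Set α⦄, M.Circuit C → e ∈ C → M.Spanning C

/-- A loop is an element `e` such that `{e}` is a circuit. -/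
def IsLoop' (M : Matroid α) (e : α) : Prop := M.Circuit {e}

/-- Two non-loop elements of the ground set are parallel if they are equal or
form a two-element circuit. -/
def Parallel (M : Matroid α) (e f : α) : Prop :=
  e ∈ M.E ∧ f ∈ M.E ∧ ¬ M.IsLoop' e ∧ ¬ M.IsLoop' f ∧ (e = f ∨ M.Circuit {e, f})

/-- Two matroids are isomorphic if there is a bijection between their ground sets
mapping independent sets to independent sets. -/
def IsIso (M : Matroid α) (N : Matroid β) : Prop :=
  ∃ e : M.E ≃ N.E, ∀ I : Set M.E,
    M.Indep (Subtype.val '' I) ↔ N.Indep (Subtype.val '' (e '' I))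

section

variable {M : Matroid α} {B C I X : Set α}

theorem circuit_iff_isCircuit : M.Circuit C ↔ M.IsCircuit C :=
  isCircuit_iff.symm

theorem rkOn_eq_ncard_of_isBasis' [M.RankFinite] (hI : M.IsBasis' I X) : M.rkOn X = I.ncard := by
  have hbound : ∀ k ∈ {k | ∃ J, M.Indep J ∧ J ⊆ X ∧ J.ncard = k}, k ≤ I.ncard := by
    rintro _ ⟨J, hJ, hJX, rfl⟩
    obtain ⟨J', hJ', hJJ'⟩ := hJ.subset_isBasis'_of_subset hJX
    calc J.ncard ≤ J'.ncard := ncard_le_ncard hJJ' hJ'.indep.finite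
      _ = I.ncard := by rw [ncard_def, ncard_def, hJ'.encard_eq_encard hI]
  exact le_antisymm (csSup_le ⟨_, I, hI.indep, hI.subset, rfl⟩ hbound)
    (le_csSup ⟨_, hbound⟩ ⟨I, hI.indep, hI.subset, rfl⟩)

theorem IsBase.rank_eq_ncard [M.RankFinite] (hB : M.IsBase B) : M.rank = B.ncard :=
  rkOn_eq_ncard_of_isBasis' hB.isBasis_ground.isBasis'

theorem IsCircuit.rkOn_add_one_eq [M.RankFinite] (hC : M.IsCircuit C) :
    M.rkOn C + 1 = C.ncard := by
  obtain ⟨e, he⟩ := hC.nonempty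
  rw [rkOn_eq_ncard_of_isBasis' (hC.sdiff_singleton_isBasis he).isBasis',
    ncard_sdiff_singleton_add_one he hC.finite]

theorem IsCircuit.ncard_eq_rank_of_hyperplane [M.RankFinite] (hC : M.IsCircuit C)
    (hH : M.Hyperplane C) : C.ncard = M.rank := by
  rw [← hC.rkOn_add_one_eq, hH.2]

theorem IsCircuit.rank_lt_ncard_of_spanning [M.RankFinite] (hC : M.IsCircuit C)
    (hCs : M.Spanning C) : M.rank < C.ncard := by
  obtain ⟨B, hB, hBC⟩ := hCs.exists_isBase_subset
  have hBC' : B ⊂ C := hBC.ssubset_of_ne (by rintro rfl; exact hC.dep.not_indep hB.indep)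
  rw [hB.rank_eq_ncard]
  exact ncard_lt_ncard hBC' hC.finite

theorem Indep.isBase_of_ncard_eq_rank [M.RankFinite] (hI : M.Indep I) (hIr : I.ncard = M.rank) :
    M.IsBase I := by
  obtain ⟨B, hB, hIB⟩ := hI.exists_isBase_superset
  rwa [eq_of_subset_of_ncard_le hIB (by rw [← hB.rank_eq_ncard, hIr]) hB.finite]

theorem isBase_iff_of_forall_nonspanning_ncard_eq_rank [M.Finite]
    (h : ∀ C, M.IsCircuit C → ¬ M.Spanning C → C.ncard = M.rank) :
    M.IsBase X ↔ X ⊆ M.E ∧ X.ncard = M.rank ∧ ¬ M.IsCircuit X := by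
  refine ⟨fun hX ↦ ⟨hX.subset_ground, hX.rank_eq_ncard.symm, fun hXc ↦ hXc.dep.not_indep hX.indep⟩,
    fun ⟨hXE, hXr, hXc⟩ ↦ ?_⟩
  refine Indep.isBase_of_ncard_eq_rank (by_contra fun hXi ↦ ?_) hXr
  obtain ⟨C, hCX, hC⟩ := ((not_indep_iff hXE).1 hXi).exists_isCircuit_subset
  have hXfin : X.Finite := M.set_finite X hXE
  have hCs : ¬ M.Spanning C := fun hCs ↦
    (hC.rank_lt_ncard_of_spanning hCs).not_ge (hXr ▸ ncard_le_ncard hCX hXfin)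
  exact hXc (eq_of_subset_of_ncard_le hCX (by rw [hXr, h C hC hCs]) hXfin ▸ hC)

theorem dual_eq_self_of_isBase_sdiff (h : ∀ B, M.IsBase B → M.IsBase (M.E \ B)) : M✶ = M := by
  refine ext_isBase rfl fun B hB ↦ ?_
  rw [M.dual_isBase_iff hB]
  exact ⟨fun hB' ↦ sdiff_sdiff_cancel_left hB ▸ h _ hB', h B⟩

end

theorem pn_self_dual_general (M : Matroid α) [M.Finite]
    (A B : Set α) (hAB : Disjoint A B) (hU : A ∪ B = M.E)
    (hA : M.Circuit A ∧ M.Hyperplane A) (hB : M.Circuit B ∧ M.Hyperplane B)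
    (hns : ∀ C : Set α, M.Circuit C → ¬ M.Spanning C → C = A ∨ C = B) :
    M✶ = M := by
  simp only [circuit_iff_isCircuit] at hA hB hns
  have hAr := hA.1.ncard_eq_rank_of_hyperplane hA.2
  have hBr := hB.1.ncard_eq_rank_of_hyperplane hB.2
  have hEr : M.E.ncard = M.rank + M.rank := by
    rw [← hU, ncard_union_eq hAB (M.set_finite A (hU ▸ subset_union_left))
      (M.set_finite B (hU ▸ subset_union_right)), hAr, hBr]
  have hsparse : ∀ C, M.IsCircuit C → ¬ M.Spanning C → C.ncard = M.rank := fun C hC hCs ↦ by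
    obtain rfl | rfl := hns C hC hCs <;> assumption
  have hEA : M.E \ A = B := hU ▸ union_sdiff_cancel_left (disjoint_iff.1 hAB).subset
  have hEB : M.E \ B = A := hU ▸ union_sdiff_cancel_right (disjoint_iff.1 hAB).subset
  refine dual_eq_self_of_isBase_sdiff fun X hX ↦ ?_
  rw [isBase_iff_of_forall_nonspanning_ncard_eq_rank hsparse] at hX ⊢
  obtain ⟨hXE, hXr, hXc⟩ := hX
  have hYr : (M.E \ X).ncard = M.rank := by rw [ncard_sdiff hXE (M.set_finite X hXE)]; omega
  refine ⟨sdiff_subset, hYr, fun hY ↦ hXc ?_⟩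
  have hYs : ¬ M.Spanning (M.E \ X) := fun hs ↦ (hY.rank_lt_ncard_of_spanning hs).ne' hYr
  rw [← sdiff_sdiff_cancel_left hXE]
  obtain h | h := hns _ hY hYs
  · rw [h, hEA]; exact hB.1
  · rw [h, hEB]; exact hA.1

/-- The matroid `P_n` is self-dual : a finite matroid of rank `n ≥ 2` whose ground set
is partitioned into two circuit-hyperplanes, such that every non-spanning circuit is
one of them, equals its own dual. -/
theorem pn_self_dual (M : Matroid α) [M.Finite] (n : ℕ) (hn : 2 ≤ n) (hr : M.rank = n)
    (A B : Set α) (hAB : Disjoint A B) (hU : A ∪ B = M.E)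
    (hA : M.Circuit A ∧ M.Hyperplane A) (hB : M.Circuit B ∧ M.Hyperplane B)
    (hns : ∀ C : Set α, M.Circuit C → ¬ M.Spanning C → C = A ∨ C = B) :
    M✶ = M :=
  pn_self_dual_general M A B hAB hU hA hB hns

end Matroid
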